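/- Let $A$ be a complex unital Banach algebra, let $h : \mathbb{R} \times \mathbb{R} \to A$, $(k,X) \mapsto h(k,X)$, be twice continuously differentiable, and assume $\partial_k^2 h = 1_A$ and $\partial_k \partial_X h = 0$ identically (as holds for the Bloch symbol $h(k,X) = \tfrac12(-i\nabla + k)^2 + V(\cdot, X)$). Let $z \in \mathbb{C}$ be such that $z\cdot 1_A - h(k,X)$ is invertible in $A$ for every $(k,X)$ and write $r(k,X) := (z\cdot 1_A - h(k,X))^{-1}$. For twice differentiable maps $F, G : \mathbb{R}^2 \to A$ define the second-order Poisson bracket $\{F,G\}_2 := (\partial_k^2 F)(\partial_X^2 G) + (\partial_X^2 F)(\partial_k^2 G) - 2(\partial_k\partial_X F)(\partial_k\partial_X G)$, products in $A$ in the indicated order. Then at every point $(k,X)$, $\{(z-h),\, r\}_2 = -2\, r\,(\partial_X h)\, r\,(\partial_X h)\, r \;-\; r\,(\partial_X^2 h)\, r \;-\; 2\,(\partial_X^2 h)\, r\,(\partial_k h)\, r\,(\partial_k h)\, r \;-\; (\partial_X^2 h)\, r^2$. -/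

import Mathlib

noncomputable section

variable {A : Type*} [NormedRing A] [NormedAlgebra ℂ A] [CompleteSpace A]

/-- Partial derivative with respect to the first variable `k`. -/
def pk (F : ℝ × ℝ → A) (p : ℝ × ℝ) : A := fderiv ℝ F p (1, 0)

/-- Partial derivative with respect to the second variable `X`. -/
def pX (F : ℝ × ℝ → A) (p : ℝ × ℝ) : A := fderiv ℝ F p (0, 1)

/-- The second-order Poisson bracket
`{F, G}₂ = (∂_k² F)(∂_X² G) + (∂_X² F)(∂_k² G) - 2 (∂_k ∂_X F)(∂_k ∂_X G)`
of two Banach-algebra-valued symbols, products taken in the indicated order. -/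
def pbracket2 (F G : ℝ × ℝ → A) (p : ℝ × ℝ) : A :=
  pk (pk F) p * pX (pX G) p + pX (pX F) p * pk (pk G) p
    - 2 * (pk (pX F) p * pk (pX G) p)

/-!
Since `∂_k² (z - h) = -1`, `∂_k ∂_X (z - h) = 0` and `∂_X² (z - h) = -∂_X² h`, the bracket equals
`-∂_X² r - (∂_X² h) ∂_k² r`. Differentiating `r = (z - h)⁻¹` gives `∂_v r = r (∂_v h) r`, and once
more `∂_w ∂_v r = r (∂_w h) r (∂_v h) r + r (∂_w ∂_v h) r + r (∂_v h) r (∂_w h) r`; inserting this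
for `v = w = k` and `v = w = X` gives the formula.
-/

section DirectionalDerivatives

variable {B : Type*} [NormedRing B] [NormedAlgebra ℂ B] (c : B) (F : ℝ × ℝ → B)

theorem pk_neg : pk (fun q => -F q) = fun q => -pk F q :=
  funext fun q => by simp [pk, fderiv_fun_neg]

theorem pX_neg : pX (fun q => -F q) = fun q => -pX F q :=
  funext fun q => by simp [pX, fderiv_fun_neg]

theorem pk_const_sub : pk (fun q => c - F q) = fun q => -pk F q :=
  funext fun q => by simp [pk, fderiv_const_sub]

theorem pX_const_sub : pX (fun q => c - F q) = fun q => -pX F q :=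
  funext fun q => by simp [pX, fderiv_const_sub]

theorem pbracket2_const_sub_left (G : ℝ × ℝ → B) (p : ℝ × ℝ) :
    pbracket2 (fun q => c - F q) G p = -pbracket2 F G p := by
  simp only [pbracket2, pk_const_sub, pX_const_sub, pk_neg, pX_neg]
  noncomm_ring

end DirectionalDerivatives

section Resolvent

open ContinuousLinearMap

variable {𝕜 E R : Type*} [NontriviallyNormedField 𝕜] [NormedAddCommGroup E] [NormedSpace 𝕜 E]
  [NormedRing R] [NormedAlgebra 𝕜 R] [CompleteSpace R] {c : R} {h : E → R} {x : E}

theorem HasFDerivAt.ringInverse {f : E → R} {f' : E →L[𝕜] R} (hf : HasFDerivAt f f' x)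
    (hx : IsUnit (f x)) :
    HasFDerivAt (fun y => Ring.inverse (f y))
      (-(mulLeftRight 𝕜 R (Ring.inverse (f x)) (Ring.inverse (f x))).comp f') x := by
  obtain ⟨u, hu⟩ := hx
  have hinv := hasFDerivAt_ringInverse (𝕜 := 𝕜) u
  rw [← Ring.inverse_unit u, hu] at hinv
  exact hinv.comp x hf

theorem hasFDerivAt_inverse_const_sub {h' : E →L[𝕜] R} (hh : HasFDerivAt h h' x)
    (hx : IsUnit (c - h x)) :
    HasFDerivAt (fun y => Ring.inverse (c - h y))
      ((mulLeftRight 𝕜 R (Ring.inverse (c - h x)) (Ring.inverse (c - h x))).comp h') x := by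
  simpa using (hh.const_sub c).ringInverse hx

theorem fderiv_inverse_const_sub_apply (hh : DifferentiableAt 𝕜 h x) (hx : IsUnit (c - h x))
    (v : E) :
    fderiv 𝕜 (fun y => Ring.inverse (c - h y)) x v
      = Ring.inverse (c - h x) * fderiv 𝕜 h x v * Ring.inverse (c - h x) := by
  simp [(hasFDerivAt_inverse_const_sub hh.hasFDerivAt hx).fderiv]

theorem fderiv_fderiv_inverse_const_sub_apply (hh : Differentiable 𝕜 h)
    (hc : ∀ y, IsUnit (c - h y)) {v : E} (hv : DifferentiableAt 𝕜 (fun y => fderiv 𝕜 h y v) x)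
    (w : E) :
    fderiv 𝕜 (fun y => fderiv 𝕜 (fun y => Ring.inverse (c - h y)) y v) x w
      = Ring.inverse (c - h x) * fderiv 𝕜 h x w * Ring.inverse (c - h x) * fderiv 𝕜 h x v
            * Ring.inverse (c - h x)
        + Ring.inverse (c - h x) * fderiv 𝕜 (fun y => fderiv 𝕜 h y v) x w * Ring.inverse (c - h x)
        + Ring.inverse (c - h x) * fderiv 𝕜 h x v * Ring.inverse (c - h x) * fderiv 𝕜 h x w
            * Ring.inverse (c - h x) := by
  have hr := fun y => hasFDerivAt_inverse_const_sub (c := c) (hh y).hasFDerivAt (hc y)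
  simp_rw [fderiv_inverse_const_sub_apply (hh _) (hc _)]
  rw [show (fun y => Ring.inverse (c - h y) * fderiv 𝕜 h y v * Ring.inverse (c - h y))
      = ((fun y => Ring.inverse (c - h y)) * fun y => fderiv 𝕜 h y v) *
        fun y => Ring.inverse (c - h y) from rfl,
    (((hr x).mul' hv.hasFDerivAt).mul' (hr x)).fderiv]
  simp only [Pi.mul_apply, smul_add, add_apply, smul_apply, comp_apply, mulLeftRight_apply,
    smul_eq_mul, MulOpposite.smul_eq_mul_unop, MulOpposite.unop_op]
  noncomm_ring

end Resolvent

/-- Reformulation of the term `III` in the second-order semiclassical coefficient: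
for a symbol with `∂_k² h = 1` and `∂_k ∂_X h = 0` (as for the Bloch symbol),
`{(z-h), r}₂ = -2 r (∂_X h) r (∂_X h) r - r (∂_X² h) r - 2 (∂_X² h) r (∂_k h) r (∂_k h) r - (∂_X² h) r²`
where `r = (z-h)⁻¹`. -/
theorem stmt_15 (h : ℝ × ℝ → A) (hh : ContDiff ℝ 2 h)
    (hkk : ∀ p : ℝ × ℝ, pk (pk h) p = 1)
    (hkX : ∀ p : ℝ × ℝ, pk (pX h) p = 0)
    (z : ℂ)
    (hz : ∀ p : ℝ × ℝ, IsUnit (algebraMap ℂ A z - h p))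
    (r : ℝ × ℝ → A)
    (hr : ∀ p : ℝ × ℝ, r p = Ring.inverse (algebraMap ℂ A z - h p))
    (p : ℝ × ℝ) :
    pbracket2 (fun q => algebraMap ℂ A z - h q) r p =
      -2 * (r p * pX h p * r p * pX h p * r p) - r p * pX (pX h) p * r p
        - 2 * (pX (pX h) p * r p * pk h p * r p * pk h p * r p)
        - pX (pX h) p * r p ^ 2 := by
  have hdiff : Differentiable ℝ h := hh.differentiable two_ne_zero
  have hdiff_fderiv_apply (v : ℝ × ℝ) : Differentiable ℝ fun q => fderiv ℝ h q v :=
    ((hh.fderiv_right (m := 1) le_rfl).clm_apply contDiff_const).differentiable one_ne_zero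
  have hrkk : pk (pk r) p = r p * pk h p * r p * pk h p * r p + r p * pk (pk h) p * r p
      + r p * pk h p * r p * pk h p * r p := by
    simp only [funext hr]
    exact fderiv_fderiv_inverse_const_sub_apply hdiff hz (hdiff_fderiv_apply (1, 0) p) (1, 0)
  have hrXX : pX (pX r) p = r p * pX h p * r p * pX h p * r p + r p * pX (pX h) p * r p
      + r p * pX h p * r p * pX h p * r p := by
    simp only [funext hr]
    exact fderiv_fderiv_inverse_const_sub_apply hdiff hz (hdiff_fderiv_apply (0, 1) p) (0, 1)
  rw [pbracket2_const_sub_left, pbracket2, hrkk, hrXX, hkk, hkX]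
  noncomm_ring

end
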